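/- (Rank condition for hybrid MPC) Consider the hybrid MPC with stacked variable $x = (x_0; \dots; x_T; u_0; \dots; u_{T-1})$, block data $P = \mathrm{diag}(Q, R)$ with $Q = \mathrm{diag}(Q_1,\dots,Q_T)$, $R = \mathrm{diag}(R_1,\dots,R_T)$, equality constraint matrix $G$ encoding $x_0 = x_{init}$ and $x_{t+1} = \bar{A}x_t + \bar{B}u_t$ for $t=0,\dots,T-1$, and $I_{\mathcal{B}}$ selecting all input variables $u_0,\dots,u_{T-1}$. Then the matrix $[P\; I_{\mathcal{B}}^\top\; G^\top]$ has full row rank, regardless of $\bar{A}, \bar{B}, Q_t, R_t$. -/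

import Mathlib

open Matrix

/-- Stacked variable index for the hybrid MPC: states `x_0, …, x_T` then inputs
`u_0, …, u_{T-1}`. -/
abbrev MPCVar (T nx nu : ℕ) := ((Fin (T + 1)) × Fin nx) ⊕ ((Fin T) × Fin nu)

/-- Block-diagonal cost matrix `P = diag(Q, R)` with `Q = diag(Q_0,…,Q_T)`,
`R = diag(R_0,…,R_{T-1})`. -/
def MPCP (T nx nu : ℕ) (Qs : Fin (T + 1) → Matrix (Fin nx) (Fin nx) ℝ)
    (Rs : Fin T → Matrix (Fin nu) (Fin nu) ℝ) :
    Matrix (MPCVar T nx nu) (MPCVar T nx nu) ℝ :=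
  Matrix.fromBlocks
    (fun a b => if a.1 = b.1 then Qs a.1 a.2 b.2 else 0) 0 0
    (fun a b => if a.1 = b.1 then Rs a.1 a.2 b.2 else 0)

/-- Equality-constraint matrix `G` encoding the initial condition `x_0 = x_init`
and the dynamics `x_{t+1} = Ā x_t + B̄ u_t`, i.e. rows `Ā x_t - x_{t+1} + B̄ u_t`. -/
def MPCG (T nx nu : ℕ) (Abar : Matrix (Fin nx) (Fin nx) ℝ)
    (Bbar : Matrix (Fin nx) (Fin nu) ℝ) :
    Matrix ((Fin nx) ⊕ ((Fin T) × Fin nx)) (MPCVar T nx nu) ℝ :=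
  fun row col =>
    match row, col with
    | .inl i, .inl sj => if sj.1 = 0 ∧ sj.2 = i then 1 else 0
    | .inl _, .inr _ => 0
    | .inr ti, .inl sj =>
        if sj.1 = (ti.1 : Fin T).castSucc then Abar ti.2 sj.2
        else if sj.1 = (ti.1 : Fin T).succ then (if sj.2 = ti.2 then -1 else 0) else 0
    | .inr ti, .inr sj => if sj.1 = ti.1 then Bbar ti.2 sj.2 else 0

/-- Row-selection matrix `I_𝓑` selecting all the input variables `u_0, …, u_{T-1}`. -/
def MPCIB (T nx nu : ℕ) : Matrix ((Fin T) × Fin nu) (MPCVar T nx nu) ℝ :=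
  fun b col =>
    match col with
    | .inl _ => 0
    | .inr b' => if b' = b then 1 else 0


lemma sum_if_pair {α : Type*} [Fintype α] [DecidableEq α] {c c' : α} (h : c ≠ c')
    (F G : α → ℝ) :
    ∑ s, (if s = c then F s else if s = c' then G s else 0) = F c + G c' := by
  have key : ∀ s, (if s = c then F s else if s = c' then G s else 0)
      = (if s = c then F s else 0) + (if s = c' then G s else 0) := by
    intro s
    split_ifs with h1 h2 <;> simp_all
  simp only [key, Finset.sum_add_distrib, Finset.sum_ite_eq' Finset.univ,
    Finset.mem_univ, if_true]

/-- Rank condition for hybrid MPC: the matrix `[P  I_𝓑ᵀ  Gᵀ]` of the stacked hybrid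
MPC problem has full row rank `n = (T+1)n_x + T n_u`, regardless of
`Ā, B̄, Q_t, R_t`. -/
theorem mpc_rank_condition (T nx nu : ℕ)
    (Abar : Matrix (Fin nx) (Fin nx) ℝ) (Bbar : Matrix (Fin nx) (Fin nu) ℝ)
    (Qs : Fin (T + 1) → Matrix (Fin nx) (Fin nx) ℝ)
    (Rs : Fin T → Matrix (Fin nu) (Fin nu) ℝ) :
    (Matrix.fromCols (MPCP T nx nu Qs Rs)
      (Matrix.fromCols (MPCIB T nx nu)ᵀ (MPCG T nx nu Abar Bbar)ᵀ)).rank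
      = (T + 1) * nx + T * nu := by
  set M := Matrix.fromCols (MPCP T nx nu Qs Rs)
      (Matrix.fromCols (MPCIB T nx nu)ᵀ (MPCG T nx nu Abar Bbar)ᵀ) with hM
  have hinj : Function.Injective (Mᵀ).mulVecLin := by
    rw [← LinearMap.ker_eq_bot, LinearMap.ker_eq_bot']
    intro y hy
    have hy' : y ᵥ* M = 0 := by
      rw [← Matrix.mulVec_transpose]; exact hy
    rw [hM, Matrix.vecMul_fromCols, Matrix.vecMul_fromCols] at hy'
    have hIB : MPCIB T nx nu *ᵥ y = 0 := by
      funext b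
      have := congrFun hy' (Sum.inr (Sum.inl b))
      simpa [Matrix.vecMul_transpose] using this
    have hG : MPCG T nx nu Abar Bbar *ᵥ y = 0 := by
      funext r
      have := congrFun hy' (Sum.inr (Sum.inr r))
      simpa [Matrix.vecMul_transpose] using this
    have hu : ∀ b, y (Sum.inr b) = 0 := by
      intro b
      have := congrFun hIB b
      simpa [Matrix.mulVec, dotProduct, MPCIB, Fintype.sum_sum_type,
        ite_mul, one_mul, zero_mul, Finset.sum_ite_eq' Finset.univ] using this
    have hx : ∀ s : Fin (T + 1), ∀ i, y (Sum.inl (s, i)) = 0 := by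
      intro s
      induction s using Fin.induction with
      | zero =>
        intro i
        have := congrFun hG (Sum.inl i)
        simpa [Matrix.mulVec, dotProduct, MPCG, Fintype.sum_sum_type,
          Fintype.sum_prod_type, ite_and, ite_mul, one_mul, zero_mul,
          Finset.sum_ite_eq' Finset.univ, Finset.sum_ite_eq Finset.univ] using this
      | succ t ih =>
        intro i
        have h0 := congrFun hG (Sum.inr (t, i))
        rw [Pi.zero_apply] at h0
        have hexp : (MPCG T nx nu Abar Bbar *ᵥ y) (Sum.inr (t, i))
            = ∑ s : Fin (T + 1), (if s = t.castSucc then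
                ∑ j, Abar i j * y (Sum.inl (s, j))
              else if s = t.succ then
                ∑ j, (if j = i then (-1 : ℝ) else 0) * y (Sum.inl (s, j))
              else 0) := by
          rw [Matrix.mulVec]
          simp only [dotProduct, Fintype.sum_sum_type, MPCG]
          have h2 : ∑ sj : Fin T × Fin nu,
              (if sj.1 = t then Bbar i sj.2 else 0) * y (Sum.inr sj) = 0 := by
            apply Finset.sum_eq_zero
            intro sj _
            rw [hu sj]; ring
          rw [h2, add_zero, Fintype.sum_prod_type]
          apply Finset.sum_congr rfl
          intro s _
          split_ifs with h1 h2 <;> simp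
        rw [hexp, sum_if_pair (Fin.castSucc_lt_succ (i := t)).ne] at h0
        have hz : ∑ j, Abar i j * y (Sum.inl (t.castSucc, j)) = 0 := by
          apply Finset.sum_eq_zero
          intro j _
          rw [ih j]; ring
        rw [hz, zero_add] at h0
        have : ∑ j, (if j = i then (-1 : ℝ) else 0) * y (Sum.inl (t.succ, j))
            = - y (Sum.inl (t.succ, i)) := by
          simp [ite_mul, Finset.sum_ite_eq' Finset.univ]
        rw [this] at h0
        linarith
    funext c
    rcases c with ⟨s, i⟩ | b
    · exact hx s i
    · exact hu b
  have h1 : M.rank = Mᵀ.rank := (Matrix.rank_transpose M).symm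
  rw [h1, Matrix.rank, LinearMap.finrank_range_of_inj hinj]
  simp [MPCVar, Module.finrank_pi, mul_comm]
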